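/- Let A be a real symmetric n×n matrix and v ∈ ℝⁿ. Suppose for some N' > 0 there exists a nonzero vector w in the minimal eigenspace of A_{N'} := A - (2/N') v vᵀ with w orthogonal to v. Then for every N with N' ≤ N (including N = ∞, i.e., the matrix A itself), λ_min(A - (2/N) v vᵀ) = λ_min(A_{N'}). -/

import Mathlib

/-! The quadratic form `x ↦ xᵀ (A - c v vᵀ) x = xᵀ A x - c (v ⬝ x)²` is nonincreasing in `c`, hence
so is `λ_min(A - c v vᵀ)`. Conversely, a vector `w ⊥ v` satisfies `v vᵀ w = 0`, so an eigenvector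
`w ⊥ v` of `A - c' v vᵀ` for its smallest eigenvalue is an eigenvector of every `A - c v vᵀ` with
the same eigenvalue; for `c ≤ c'` this bounds `λ_min(A - c v vᵀ)` from above by `λ_min(A - c' v vᵀ)`.
With `c = 2/N ≤ c' = 2/N'` (and `c = 0` for `N = ∞`) this gives the theorem. -/

open Matrix

/-- The smallest eigenvalue of a symmetric matrix, defined via the Rayleigh quotient
as the infimum of `vᵀ M v` over unit vectors `v`. -/
noncomputable def lamMin {ι : Type} [Fintype ι] (M : Matrix ι ι ℝ) : ℝ :=
  ⨅ v : {v : ι → ℝ // ∑ i, (v i) ^ 2 = 1}, (v : ι → ℝ) ⬝ᵥ (M *ᵥ (v : ι → ℝ))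

section RayleighQuotient

variable {ι : Type} [Fintype ι]

lemma bddBelow_range_dotProduct_mulVec_of_unit (M : Matrix ι ι ℝ) :
    BddBelow (Set.range fun x : {x : ι → ℝ // ∑ i, x i ^ 2 = 1} =>
      (x : ι → ℝ) ⬝ᵥ M *ᵥ (x : ι → ℝ)) := by
  refine ⟨-∑ i, ∑ j, |M i j|, ?_⟩
  rintro _ ⟨⟨x, hx⟩, rfl⟩
  have hx_le_one : ∀ i, |x i| ≤ 1 := fun i => (sq_le_one_iff_abs_le_one _).mp <|
    hx ▸ Finset.single_le_sum (fun j _ => sq_nonneg (x j)) (Finset.mem_univ i)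
  have hterm : ∀ i j, |x i * (M i j * x j)| ≤ |M i j| := fun i j => by
    calc |x i * (M i j * x j)| = |x i| * (|M i j| * |x j|) := by rw [abs_mul, abs_mul]
      _ ≤ 1 * (|M i j| * 1) := by gcongr <;> exact hx_le_one _
      _ = |M i j| := by ring
  have habs : |x ⬝ᵥ M *ᵥ x| ≤ ∑ i, ∑ j, |M i j| := by
    simp only [dotProduct, mulVec, Finset.mul_sum]
    exact (Finset.abs_sum_le_sum_abs _ _).trans <| Finset.sum_le_sum fun i _ =>
      (Finset.abs_sum_le_sum_abs _ _).trans <| Finset.sum_le_sum fun j _ => hterm i j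
  exact neg_le_of_abs_le habs

lemma lamMin_le_dotProduct_mulVec (M : Matrix ι ι ℝ) {x : ι → ℝ} (hx : ∑ i, x i ^ 2 = 1) :
    lamMin M ≤ x ⬝ᵥ M *ᵥ x :=
  ciInf_le (bddBelow_range_dotProduct_mulVec_of_unit M) ⟨x, hx⟩

lemma lamMin_mono {M M' : Matrix ι ι ℝ} (h : ∀ x, x ⬝ᵥ M *ᵥ x ≤ x ⬝ᵥ M' *ᵥ x) :
    lamMin M ≤ lamMin M' := by
  rcases isEmpty_or_nonempty {x : ι → ℝ // ∑ i, x i ^ 2 = 1} with _ | _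
  · simp only [lamMin, Real.iInf_of_isEmpty, le_refl]
  · exact le_ciInf fun x => (lamMin_le_dotProduct_mulVec M x.2).trans (h x)

lemma lamMin_le_of_mulVec_eq_smul {M : Matrix ι ι ℝ} {w : ι → ℝ} {μ : ℝ} (hw : w ≠ 0)
    (hMw : M *ᵥ w = μ • w) : lamMin M ≤ μ := by
  have hpos : 0 < w ⬝ᵥ w := dotProduct_self_star_pos_iff.mpr hw
  set u := (√(w ⬝ᵥ w))⁻¹ • w with hu
  have huu : u ⬝ᵥ u = 1 := by
    rw [hu, smul_dotProduct, dotProduct_smul, smul_eq_mul, smul_eq_mul, ← mul_assoc,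
      ← mul_inv, Real.mul_self_sqrt hpos.le, inv_mul_cancel₀ hpos.ne']
  calc lamMin M ≤ u ⬝ᵥ M *ᵥ u := lamMin_le_dotProduct_mulVec M (by simpa [dotProduct, sq] using huu)
    _ = μ := by rw [hu, mulVec_smul, hMw, smul_comm, ← hu, dotProduct_smul, huu, smul_eq_mul, mul_one]

lemma dotProduct_sub_smul_vecMulVec_mulVec (M : Matrix ι ι ℝ) (v x : ι → ℝ) (c : ℝ) :
    x ⬝ᵥ (M - c • vecMulVec v v) *ᵥ x = x ⬝ᵥ M *ᵥ x - c * (v ⬝ᵥ x) ^ 2 := by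
  rw [sub_mulVec, dotProduct_sub, smul_mulVec, vecMulVec_mulVec, dotProduct_smul,
    dotProduct_smul, dotProduct_comm x v]
  simp only [smul_eq_mul, MulOpposite.smul_eq_mul_unop, MulOpposite.unop_op]
  ring

lemma lamMin_sub_smul_vecMulVec_eq_of_orthogonal_eigenvector (A : Matrix ι ι ℝ) (v : ι → ℝ)
    {c c' : ℝ} (hc : c ≤ c')
    (hw : ∃ w : ι → ℝ, w ≠ 0 ∧
      (A - c' • vecMulVec v v) *ᵥ w = lamMin (A - c' • vecMulVec v v) • w ∧ w ⬝ᵥ v = 0) :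
    lamMin (A - c • vecMulVec v v) = lamMin (A - c' • vecMulVec v v) := by
  obtain ⟨w, hw0, heig, horth⟩ := hw
  have hw_mulVec : ∀ d : ℝ, (A - d • vecMulVec v v) *ᵥ w = A *ᵥ w := fun d => by
    rw [sub_mulVec, smul_mulVec, vecMulVec_mulVec, dotProduct_comm, horth]
    simp
  refine le_antisymm (lamMin_le_of_mulVec_eq_smul hw0 ?_) (lamMin_mono fun x => ?_)
  · rw [hw_mulVec, ← hw_mulVec c', heig]
  · rw [dotProduct_sub_smul_vecMulVec_mulVec, dotProduct_sub_smul_vecMulVec_mulVec]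
    exact sub_le_sub_left (mul_le_mul_of_nonneg_right hc (sq_nonneg _)) _

end RayleighQuotient

theorem lamMin_constant_of_orthogonal_eigenvector_general {n : ℕ}
    (A : Matrix (Fin n) (Fin n) ℝ) (v : Fin n → ℝ)
    {N' : ℝ} (hN' : 0 < N')
    (hw : ∃ w : Fin n → ℝ, w ≠ 0 ∧
      (A - (2 / N') • vecMulVec v v) *ᵥ w = lamMin (A - (2 / N') • vecMulVec v v) • w ∧
      w ⬝ᵥ v = 0) :
    (∀ N : ℝ, N' ≤ N →
      lamMin (A - (2 / N) • vecMulVec v v) = lamMin (A - (2 / N') • vecMulVec v v)) ∧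
    lamMin A = lamMin (A - (2 / N') • vecMulVec v v) := by
  refine ⟨fun N hN => lamMin_sub_smul_vecMulVec_eq_of_orthogonal_eigenvector A v ?_ hw, ?_⟩
  · exact div_le_div_of_nonneg_left zero_le_two hN' hN
  · simpa using lamMin_sub_smul_vecMulVec_eq_of_orthogonal_eigenvector A v
      (div_pos two_pos hN').le hw

/-- if the minimal eigenvalue of `A_{N'} = A - (2/N') v vᵀ` has an eigenvector
orthogonal to `v`, then `λ_min(A - (2/N) v vᵀ) = λ_min(A_{N'})` for all `N ≥ N'`, and also
`λ_min(A) = λ_min(A_{N'})` (the case `N = ∞`). -/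
theorem lamMin_constant_of_orthogonal_eigenvector {n : ℕ}
    (A : Matrix (Fin n) (Fin n) ℝ) (hA : A.IsSymm) (v : Fin n → ℝ)
    {N' : ℝ} (hN' : 0 < N')
    (hw : ∃ w : Fin n → ℝ, w ≠ 0 ∧
      (A - (2 / N') • vecMulVec v v) *ᵥ w = lamMin (A - (2 / N') • vecMulVec v v) • w ∧
      w ⬝ᵥ v = 0) :
    (∀ N : ℝ, N' ≤ N →
      lamMin (A - (2 / N) • vecMulVec v v) = lamMin (A - (2 / N') • vecMulVec v v)) ∧
    lamMin A = lamMin (A - (2 / N') • vecMulVec v v) :=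
  lamMin_constant_of_orthogonal_eigenvector_general A v hN' hw
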